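/- Let 𝓜 = (M,<,…) be a definably complete expansion of a dense linear order without endpoints and dim : Def(𝓜) → ℕ ∪ {−∞} a dimension function. Then dim X = 0 for every nonempty definable subset X of M that is closed and discrete in the order topology. -/

import Mathlib

open FirstOrder FirstOrder.Language Set

universe u v w

namespace PaperDim

section Core

variable (L : FirstOrder.Language.{v, w}) (M : Type u) [L.Structure M]

/-- The collection of definable subsets of `M^n` (definable with parameters from `M`). -/
abbrev DefSet (n : ℕ) : Type u :=
  {X : Set (Fin n → M) // Set.Definable (Set.univ : Set M) L X}

variable {L M}

/-- A definable subset of `M^1` viewed as a subset of `M`. -/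
def asSet1 (X : Set (Fin 1 → M)) : Set M := {a : M | (fun _ => a) ∈ X}

/-- The fiber of `X ⊆ M^{n+1}` over `x ∈ M^n`, as a subset of `M^1`. -/
def fiber {n : ℕ} (X : Set (Fin (n + 1) → M)) (x : Fin n → M) : Set (Fin 1 → M) :=
  {y | Fin.snoc x (y 0) ∈ X}

/-- Condition (1) of a dimension function: `dim ∅ = -∞`, `dim {a} = 0`, `dim M = 1`.
Here `d k` is the value of the dimension function on definable subsets of `M^{k+1}`. -/
def Cond1 (d : ∀ n : ℕ, DefSet L M (n + 1) → WithBot ℕ) : Prop :=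
  (∀ X : DefSet L M 1, X.1 = ∅ → d 0 X = ⊥) ∧
  (∀ (X : DefSet L M 1) (a : M), X.1 = ({fun _ => a} : Set (Fin 1 → M)) → d 0 X = 0) ∧
  (∀ X : DefSet L M 1, X.1 = (Set.univ : Set (Fin 1 → M)) → d 0 X = 1)

/-- Condition (2)ₙ (at arity `n + 1`): `dim (X ∪ Y) = max (dim X) (dim Y)`. -/
def Cond2 (d : ∀ n : ℕ, DefSet L M (n + 1) → WithBot ℕ) (n : ℕ) : Prop :=
  ∀ X Y Z : DefSet L M (n + 1), Z.1 = X.1 ∪ Y.1 → d n Z = max (d n X) (d n Y)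

/-- Condition (3)ₙ (at arity `n + 1`): invariance under coordinate permutations. -/
def Cond3 (d : ∀ n : ℕ, DefSet L M (n + 1) → WithBot ℕ) (n : ℕ) : Prop :=
  ∀ (σ : Equiv.Perm (Fin (n + 1))) (X Y : DefSet L M (n + 1)),
    Y.1 = {y : Fin (n + 1) → M | y ∘ σ ∈ X.1} → d n Y = d n X

/-- Condition (3'): invariance under switching the two coordinates, at arity 2. -/
def Cond3' (d : ∀ n : ℕ, DefSet L M (n + 1) → WithBot ℕ) : Prop :=
  ∀ X Y : DefSet L M 2, Y.1 = {v : Fin 2 → M | ![v 1, v 0] ∈ X.1} → d 1 Y = d 1 X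

/-- Condition (4)ₙ, the addition property (at arity `n + 2`):
the set `X(i)` of points over which the fiber of `X` has dimension `i` is definable, and
`dim (X ∩ Π⁻¹(X(i))) = dim X(i) + i`. -/
def Cond4 (d : ∀ n : ℕ, DefSet L M (n + 1) → WithBot ℕ) (n : ℕ) : Prop :=
  ∀ (X : DefSet L M (n + 2)) (i : Fin 2),
    ∃ (Xi : DefSet L M (n + 1)) (W : DefSet L M (n + 2)),
      Xi.1 = {x : Fin (n + 1) → M |
        ∃ hf : Set.Definable (Set.univ : Set M) L (fiber X.1 x),
          d 0 ⟨fiber X.1 x, hf⟩ = ((i : ℕ) : WithBot ℕ)} ∧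
      W.1 = X.1 ∩ (fun z : Fin (n + 2) → M => z ∘ Fin.castSucc) ⁻¹' Xi.1 ∧
      d (n + 1) W = d n Xi + ((i : ℕ) : WithBot ℕ)

/-- A dimension function on the structure `M` (van den Dries). -/
def IsDimFun (d : ∀ n : ℕ, DefSet L M (n + 1) → WithBot ℕ) : Prop :=
  Cond1 d ∧ (∀ n, Cond2 d n) ∧ (∀ n, Cond3 d n) ∧ (∀ n, Cond4 d n)

/-- A weak dimension function: conditions (1), (2)₁, (3') and (4)ₙ for all `n > 1`. -/
def IsWeakDimFun (d : ∀ n : ℕ, DefSet L M (n + 1) → WithBot ℕ) : Prop :=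
  Cond1 d ∧ Cond2 d 0 ∧ Cond3' d ∧ (∀ n, Cond4 d n)

variable (L M)

/-- The set `DIM(M)` of dimension functions on `M`. -/
def DimFuns : Set (∀ n : ℕ, DefSet L M (n + 1) → WithBot ℕ) := {d | IsDimFun d}

/-- `𝔫_dim(M)`: the cardinality of the set of dimension functions on `M`. -/
noncomputable def nDim : Cardinal := Cardinal.mk (DimFuns L M)

/-- The order `<` is definable in the structure. -/
def LtDefinable [LT M] : Prop :=
  Set.Definable (Set.univ : Set M) L {v : Fin 2 → M | v 0 < v 1}

/-- The graph of addition is definable in the structure. -/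
def AddDefinable [Add M] : Prop :=
  Set.Definable (Set.univ : Set M) L {v : Fin 3 → M | v 0 + v 1 = v 2}

/-- The graph of multiplication is definable in the structure. -/
def MulDefinable [Mul M] : Prop :=
  Set.Definable (Set.univ : Set M) L {v : Fin 3 → M | v 0 * v 1 = v 2}

end Core

/-- The order topology on a linear order, generated by open rays. -/
def orderTop (α : Type*) [LinearOrder α] : TopologicalSpace α :=
  TopologicalSpace.generateFrom {s : Set α | (∃ a, s = Set.Ioi a) ∨ (∃ a, s = Set.Iio a)}

/-- A set is discrete (w.r.t. a topology `t`) if all of its points are isolated in it. -/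
def DiscreteIn {α : Type*} (t : TopologicalSpace α) (D : Set α) : Prop :=
  ∀ x ∈ D, ∃ U : Set α, t.IsOpen U ∧ U ∩ D = {x}

/-- An open interval: a nonempty set of the form `(a, b)` with `a, b ∈ M ∪ {±∞}`. -/
def IsOpenInterval {α : Type*} [Preorder α] (S : Set α) : Prop :=
  S.Nonempty ∧ ((∃ a b, S = Set.Ioo a b) ∨ (∃ a, S = Set.Ioi a) ∨
    (∃ b, S = Set.Iio b) ∨ S = Set.univ)

section Ord

variable (L : FirstOrder.Language.{v, w}) (M : Type u) [L.Structure M]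

/-- O-minimality: every definable subset of `M` is a union of a finite set and finitely many
open intervals. -/
def OMinimal [LinearOrder M] : Prop :=
  ∀ X : DefSet L M 1, ∃ (F : Set M) (k : ℕ) (C : Fin k → Set M),
    F.Finite ∧ (∀ i, IsOpenInterval (C i)) ∧ asSet1 X.1 = F ∪ ⋃ i, C i

/-- Weak o-minimality: every definable subset of `M` is a union of finitely many convex sets. -/
def WeaklyOMinimal [LinearOrder M] : Prop :=
  ∀ X : DefSet L M 1, ∃ (k : ℕ) (C : Fin k → Set M),
    (∀ i, (C i).OrdConnected) ∧ asSet1 X.1 = ⋃ i, C i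

/-- Definable completeness: every definable subset of `M` has a supremum and an infimum in
`M ∪ {±∞}`. -/
def DefinablyComplete [LinearOrder M] : Prop :=
  ∀ X : DefSet L M 1,
    ((asSet1 X.1).Nonempty → BddAbove (asSet1 X.1) → ∃ a, IsLUB (asSet1 X.1) a) ∧
    ((asSet1 X.1).Nonempty → BddBelow (asSet1 X.1) → ∃ a, IsGLB (asSet1 X.1) a)

/-- d-minimality: the structure is definably complete and in every elementarily equivalent
structure, every definable subset of the universe is a union of an open set and finitely many
discrete sets. The linear order is assumed to be the interpretation of the relation symbol `lt`. -/
def DMinimal [LinearOrder M] (lt : L.Relations 2) : Prop :=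
  DefinablyComplete L M ∧
  ∀ (N : Type u) [L.Structure N] [LinearOrder N],
    (∀ a b : N, Structure.RelMap lt ![a, b] ↔ a < b) →
    L.ElementarilyEquivalent M N →
    ∀ X : DefSet L N 1,
      ∃ (U : Set N) (k : ℕ) (D : Fin k → Set N),
        (orderTop N).IsOpen U ∧ (∀ i, DiscreteIn (orderTop N) (D i)) ∧
        asSet1 X.1 = U ∪ ⋃ i, D i

end Ord

open scoped Classical in
/-- The topological dimension of a definable set: the largest `d` such that the image of the
set under some coordinate projection `M^n → M^d` has nonempty interior (w.r.t. the order
topology and the corresponding product topologies). -/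
noncomputable def dimTop {M : Type u} [LinearOrder M] {n : ℕ} (X : Set (Fin n → M)) :
    WithBot ℕ :=
  if X = ∅ then ⊥
  else
    ↑(sSup {d : ℕ | ∃ f : Fin d → Fin n, Function.Injective f ∧
      (@interior (Fin d → M) (@Pi.topologicalSpace (Fin d) (fun _ => M) (fun _ => orderTop M))
        ((fun x : Fin n → M => x ∘ f) '' X)).Nonempty})


/-! ### Extra notions -/

/-- `G ⊆ M²` is the graph of a bijection from `A` onto `B`. -/
def IsDefBijectionGraph {M : Type u} (G : Set (Fin 2 → M)) (A B : Set M) : Prop :=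
  (∀ v ∈ G, v 0 ∈ A ∧ v 1 ∈ B) ∧
  (∀ x ∈ A, ∃! y : M, (![x, y] : Fin 2 → M) ∈ G) ∧
  (∀ y ∈ B, ∃! x : M, (![x, y] : Fin 2 → M) ∈ G)

section Extra

variable (L : FirstOrder.Language.{v, w}) (M : Type u) [L.Structure M]

/-- A definable set `I ⊆ M` is self-sufficient if it is infinite and there is no definable
bijection between an infinite definable subset of `I` and an infinite definable subset of
`M ∖ I`. -/
def SelfSufficient (I : Set M) : Prop :=
  I.Infinite ∧
  ∀ J₁ J₂ : DefSet L M 1, asSet1 J₁.1 ⊆ I → asSet1 J₂.1 ⊆ Iᶜ →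
    (asSet1 J₁.1).Infinite → (asSet1 J₂.1).Infinite →
    ¬ ∃ G : DefSet L M 2, IsDefBijectionGraph G.1 (asSet1 J₁.1) (asSet1 J₂.1)

/-- A self-sufficient set is minimally self-sufficient if every self-sufficient set either
meets it in a finite set or contains it up to a finite set. -/
def MinimallySelfSufficient (I : Set M) : Prop :=
  SelfSufficient L M I ∧
  ∀ X : DefSet L M 1, SelfSufficient L M (asSet1 X.1) →
    (I ∩ asSet1 X.1).Finite ∨ ∃ F : Set M, F.Finite ∧ I ⊆ asSet1 X.1 ∪ F

end Extra

/-- `I₁ ∼_fin I₂`: the symmetric difference is finite. -/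
def FinSymmDiff {M : Type u} (A B : Set M) : Prop := ((A \ B) ∪ (B \ A)).Finite

/-- `I⟨τ⟩`: the product of copies of `I` (where `τ i = false`) and `M ∖ I`
(where `τ i = true`). -/
def Itau {M : Type u} (I : Set M) {n : ℕ} (τ : Fin n → Bool) : Set (Fin n → M) :=
  {v | ∀ i, if τ i then v i ∉ I else v i ∈ I}

open scoped Classical in
/-- The value of `Dim[I]` on a (nonempty) definable set contained in `I⟨τ⟩`. -/
noncomputable def DimIPiece {M : Type u} [LinearOrder M] (I : Set M) :
    (n : ℕ) → (Fin (n + 1) → Bool) → Set (Fin (n + 1) → M) → WithBot ℕ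
  | 0, τ, X =>
    if X = ∅ then ⊥ else if τ 0 then 0 else dimTop X
  | n + 1, τ, X =>
    if X = ∅ then ⊥
    else if τ (Fin.last (n + 1)) then
      DimIPiece I n (fun i => τ i.castSucc)
        ((fun v : Fin (n + 2) → M => v ∘ Fin.castSucc) '' X)
    else
      max (dimTop {x : Fin (n + 1) → M |
              (∃ v ∈ X, v ∘ Fin.castSucc = x) ∧ dimTop (fiber X x) ≠ 1})
        (dimTop {x : Fin (n + 1) → M | dimTop (fiber X x) = 1} + 1)

/-- The function `Dim[I]` associated with a subset `I` of `M` (the input dimension being the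
topological dimension). -/
noncomputable def DimI {M : Type u} [LinearOrder M] (I : Set M) (n : ℕ)
    (X : Set (Fin (n + 1) → M)) : WithBot ℕ :=
  Finset.univ.sup fun τ : Fin (n + 1) → Bool => DimIPiece I n τ (X ∩ Itau I τ)

section Morley

variable (L : FirstOrder.Language.{v, w}) (M : Type u) [L.Structure M]

/-- The model-theoretic algebraic closure of a set of parameters `A`. -/
def aclS (A : Set M) : Set M :=
  {a : M | ∃ s : Set (Fin 1 → M), Set.Definable A L s ∧ s.Finite ∧ (fun _ => a) ∈ s}

open scoped Classical in
/-- The rank `rk^acl(X/A)`: the largest cardinality of a subset of the coordinates of a point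
of `X` that is `acl`-independent over `A` (and `-∞` for `X = ∅`). -/
noncomputable def rkOver {n : ℕ} (A : Set M) (X : Set (Fin n → M)) : WithBot ℕ :=
  if X = ∅ then ⊥
  else
    ↑(sSup {k : ℕ | ∃ x ∈ X, ∃ S : Finset (Fin n), S.card = k ∧
        ∀ i ∈ S, x i ∉ aclS L M (A ∪ x '' {j : Fin n | j ∈ S ∧ j ≠ i})})

/-- A structure is minimal if every definable subset of the universe is finite or cofinite. -/
def MinimalStr : Prop :=
  ∀ X : DefSet L M 1, (asSet1 X.1).Finite ∨ ((asSet1 X.1)ᶜ : Set M).Finite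

/-- A structure is strongly minimal if every elementarily equivalent structure is minimal. -/
def StronglyMinimal : Prop :=
  MinimalStr L M ∧
  ∀ (N : Type u) [L.Structure N], L.ElementarilyEquivalent M N → MinimalStr L N

end Morley

section Theories

/-- A divisible Abelian group structure on a subset `S`, with addition `f`. -/
def DivAbGroupOn {α : Type*} (f : α → α → α) (S : Set α) : Prop :=
  (∀ x ∈ S, ∀ y ∈ S, f x y ∈ S) ∧
  (∀ x ∈ S, ∀ y ∈ S, f x y = f y x) ∧
  (∀ x ∈ S, ∀ y ∈ S, ∀ z ∈ S, f (f x y) z = f x (f y z)) ∧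
  (∃ e ∈ S, (∀ x ∈ S, f e x = x) ∧ (∀ x ∈ S, ∃ y ∈ S, f x y = e)) ∧
  (∀ k : ℕ, 0 < k → ∀ x ∈ S, ∃ y ∈ S, (f y)^[k - 1] y = x)

/-- Embedding of `M` into `M ∪ {±∞}`. -/
def emb {α : Type*} (x : α) : WithBot (WithTop α) := ((x : WithTop α) : WithBot (WithTop α))

/-- `M` is a model of the theory `T_m` of Proposition 3.17: a DLO with constants
`c_1 < ⋯ < c_{m-1}` (recorded here by the boundary sequence
`⊥ = c 0 < c 1 < ⋯ < c m = ⊤` in `M ∪ {±∞}`), such that `+` restricts to a divisible Abelian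
group on each interval `(c_{i-1}, c_i)` and is constantly `c_1` off the union of the
`(c_{i-1}, c_i)²`. -/
def ModelTm (m : ℕ) (hm : 0 < m) (L : FirstOrder.Language.{v, w}) (M : Type u)
    [L.Structure M] [LinearOrder M]
    (lt : L.Relations 2) (plus : L.Functions 2)
    (c : Fin (m + 1) → WithBot (WithTop M)) : Prop :=
  DenselyOrdered M ∧ NoMinOrder M ∧ NoMaxOrder M ∧ Nonempty M ∧
  (∀ x y : M, Structure.RelMap lt ![x, y] ↔ x < y) ∧
  c 0 = ⊥ ∧ c (Fin.last m) = ⊤ ∧ StrictMono c ∧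
  (∀ i : Fin (m + 1), i ≠ 0 → i ≠ Fin.last m → ∃ x : M, c i = emb x) ∧
  (∀ i : Fin m,
    DivAbGroupOn (fun x y : M => Structure.funMap plus ![x, y])
      {x : M | c i.castSucc < emb x ∧ emb x < c i.succ}) ∧
  (∀ x y : M,
    (¬ ∃ i : Fin m, (c i.castSucc < emb x ∧ emb x < c i.succ) ∧
        (c i.castSucc < emb y ∧ emb y < c i.succ)) →
    ∀ z : M, c ⟨1, by omega⟩ = emb z → Structure.funMap plus ![x, y] = z)

/-- The set of realizations of a unary predicate. -/
def relSet (L : FirstOrder.Language.{v, w}) (M : Type u) [L.Structure M]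
    (r : L.Relations 1) : Set M :=
  {x : M | Structure.RelMap r ![x]}

/-- `M` is a model of the theory `T_m` of Theorem 3.18: an ordered divisible Abelian group
with a strictly increasing chain of nontrivial proper convex subgroups `U_1 ⊊ ⋯ ⊊ U_m ⊊ M`. -/
def ModelTw (m : ℕ) (L : FirstOrder.Language.{v, w}) (M : Type u)
    [L.Structure M] [AddCommGroup M] [LinearOrder M] [IsOrderedAddMonoid M]
    (lt : L.Relations 2) (plus : L.Functions 2) (U : Fin m → L.Relations 1) : Prop :=
  (∀ x y : M, Structure.RelMap lt ![x, y] ↔ x < y) ∧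
  (∀ x y : M, Structure.funMap plus ![x, y] = x + y) ∧
  (∀ k : ℕ, 0 < k → ∀ x : M, ∃ y : M, k • y = x) ∧
  (∀ i : Fin m,
    (0 : M) ∈ relSet L M (U i) ∧
    (∀ x ∈ relSet L M (U i), ∀ y ∈ relSet L M (U i), x + y ∈ relSet L M (U i)) ∧
    (∀ x ∈ relSet L M (U i), -x ∈ relSet L M (U i)) ∧
    (relSet L M (U i)).OrdConnected ∧
    relSet L M (U i) ≠ {0} ∧ relSet L M (U i) ≠ Set.univ) ∧
  (∀ i j : Fin m, i < j → relSet L M (U i) ⊂ relSet L M (U j))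

end Theories

/-!
Write `B(a)` and `A(a)` for the parts of `X` below and above `a`. By the addition property
applied to `{(a, b) | b ∈ X, b < a}`, the set of `a` with `dim B(a) = 1` is definable and upward
closed; at its infimum `c` an interval around `c` meeting `X` in at most `c` shows that it cannot
be bounded below, so as soon as one `B(a)` has dimension `1`, all of them do. Then the initial
segments of `Z = B(a)` all have dimension `1`, so `{(x, y) ∈ Z² | y < x}` has dimension `2`;
permuting coordinates, some final segment of `Z` has dimension `1`, hence by the mirror argument
all of them do, although those beyond `a` are empty. So every `B(a)`, and dually every `A(a)`,
has dimension at most `0`, and so has `X = B(a) ∪ {a} ∪ A(a)`.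
-/

section Definability

variable {L : FirstOrder.Language.{v, w}} {M : Type u} [L.Structure M]

lemma fin_one_eta (v : Fin 1 → M) : v = fun _ => v 0 :=
  funext fun i => by rw [Subsingleton.elim i 0]

lemma definable_fiber {n : ℕ} {X : Set (Fin (n + 1) → M)} (hX : (univ : Set M).Definable L X)
    (x : Fin n → M) : (univ : Set M).Definable L (fiber X x) := by
  refine hX.preimage_map (F := fun y : Fin 1 → M => Fin.snoc x (y 0)) fun i => ?_
  induction i using Fin.lastCases with
  | last => simpa using DefinableFun.proj (L := L) (A := univ) (i := (0 : Fin 1))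
  | cast j => simpa using L.definableFun_const (A := univ) (a := x j) (Fin 1) (mem_univ _)

lemma definable_singleton (a : M) :
    (univ : Set M).Definable L ({fun _ => a} : Set (Fin 1 → M)) := by
  convert (Definable.singleton L a).mono (subset_univ _) using 1
  ext v
  rw [mem_singleton_iff, mem_ofPred_eq, mem_singleton_iff, fin_one_eta v, funext_iff]
  simp

variable [LinearOrder M]

lemma definable_Iio (hlt : LtDefinable L M) (a : M) :
    (univ : Set M).Definable L {v : Fin 1 → M | v 0 < a} := by
  refine hlt.preimage_map (F := fun v => ![v 0, a]) fun i => ?_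
  fin_cases i
  · simpa using DefinableFun.proj (L := L) (A := univ) (i := (0 : Fin 1))
  · simpa using L.definableFun_const (A := univ) (a := a) (Fin 1) (mem_univ _)

end Definability

section Dual

variable {L : FirstOrder.Language.{v, w}} {M : Type u} [L.Structure M]

-- Definable sets and dimension functions on `Mᵒᵈ` are literally those on `M`, which yields the
-- mirror image of every statement about the order.
instance : L.Structure Mᵒᵈ := ‹L.Structure M›

variable [LinearOrder M]

lemma LtDefinable.dual (hlt : LtDefinable L M) : LtDefinable L Mᵒᵈ :=
  hlt.preimage_comp ![1, 0]

lemma DefinablyComplete.dual (hdc : DefinablyComplete L M) : DefinablyComplete L Mᵒᵈ :=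
  fun X => (hdc X).symm

end Dual

namespace DefSet

variable {L : FirstOrder.Language.{v, w}} {M : Type u} [L.Structure M]

def union {n : ℕ} (X Y : DefSet L M n) : DefSet L M n := ⟨X.1 ∪ Y.1, X.2.union Y.2⟩

def singleton (a : M) : DefSet L M 1 := ⟨{fun _ => a}, definable_singleton a⟩

def fiber {n : ℕ} (X : DefSet L M (n + 1)) (x : Fin n → M) : DefSet L M 1 :=
  ⟨PaperDim.fiber X.1 x, definable_fiber X.2 x⟩

lemma mem_fiber_iff {X : DefSet L M 2} {x y : Fin 1 → M} :
    y ∈ (X.fiber x).1 ↔ ![x 0, y 0] ∈ X.1 := by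
  unfold fiber PaperDim.fiber
  rw [mem_ofPred_eq]
  convert Iff.rfl using 3
  ext i
  fin_cases i <;> rfl

variable [LinearOrder M]

def interIio (Z : DefSet L M 1) (hlt : LtDefinable L M) (a : M) : DefSet L M 1 :=
  ⟨Z.1 ∩ {v | v 0 < a}, Z.2.inter (definable_Iio hlt a)⟩

def interIoi (Z : DefSet L M 1) (hlt : LtDefinable L M) (a : M) : DefSet L M 1 :=
  ⟨Z.1 ∩ {v | a < v 0}, Z.2.inter (definable_Iio (M := Mᵒᵈ) hlt.dual a)⟩

end DefSet

section DimFun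

variable {L : FirstOrder.Language.{v, w}} {M : Type u} [L.Structure M]
  {d : ∀ n : ℕ, DefSet L M (n + 1) → WithBot ℕ}

lemma IsDimFun.eq_bot_of_eq_empty (hd : IsDimFun d) {X : DefSet L M 1} (hX : X.1 = ∅) :
    d 0 X = ⊥ :=
  hd.1.1 X hX

lemma IsDimFun.eq_max_of_eq_union (hd : IsDimFun d) {n : ℕ} {X Y Z : DefSet L M (n + 1)}
    (h : Z.1 = X.1 ∪ Y.1) : d n Z = max (d n X) (d n Y) :=
  hd.2.1 n X Y Z h

lemma IsDimFun.mono (hd : IsDimFun d) {n : ℕ} {X Y : DefSet L M (n + 1)} (h : X.1 ⊆ Y.1) :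
    d n X ≤ d n Y := by
  rw [hd.eq_max_of_eq_union (union_eq_self_of_subset_left h).symm]
  exact le_max_left _ _

lemma IsDimFun.le_max_of_subset_union (hd : IsDimFun d) {n : ℕ} {X Y Y' : DefSet L M (n + 1)}
    (h : X.1 ⊆ Y.1 ∪ Y'.1) : d n X ≤ max (d n Y) (d n Y') :=
  (hd.mono (Y := Y.union Y') h).trans_eq (hd.eq_max_of_eq_union rfl)

lemma IsDimFun.le_one (hd : IsDimFun d) (X : DefSet L M 1) : d 0 X ≤ 1 :=
  (hd.mono (Y := ⟨univ, definable_univ⟩) (subset_univ _)).trans_eq (hd.1.2.2 _ rfl)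

lemma IsDimFun.singleton (hd : IsDimFun d) (a : M) : d 0 (DefSet.singleton a) = 0 :=
  hd.1.2.1 _ a rfl

lemma IsDimFun.nonneg (hd : IsDimFun d) {X : DefSet L M 1} (hX : X.1.Nonempty) : 0 ≤ d 0 X := by
  obtain ⟨v, hv⟩ := hX
  rw [← hd.singleton (v 0)]
  refine hd.mono fun w hw => ?_
  rwa [mem_singleton_iff.1 hw, ← fin_one_eta v]

lemma IsDimFun.le_zero_of_ne_one (hd : IsDimFun d) {X : DefSet L M 1} (hX : d 0 X ≠ 1) :
    d 0 X ≤ 0 :=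
  Order.le_of_lt_succ ((hd.le_one X).lt_of_ne hX)

lemma IsDimFun.nonempty_of_one_le (hd : IsDimFun d) {X : DefSet L M 1} (hX : 1 ≤ d 0 X) :
    X.1.Nonempty := by
  rw [nonempty_iff_ne_empty]
  intro h
  rw [hd.eq_bot_of_eq_empty h] at hX
  exact absurd hX (by decide)

end DimFun

section Fibers

variable {L : FirstOrder.Language.{v, w}} {M : Type u} [L.Structure M]
  {d : ∀ n : ℕ, DefSet L M (n + 1) → WithBot ℕ}

lemma IsDimFun.exists_eq_max_fiber_dims (hd : IsDimFun d) {n : ℕ} (X : DefSet L M (n + 2)) :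
    ∃ B₀ B₁ : DefSet L M (n + 1), (∀ x, x ∈ B₀.1 ↔ d 0 (X.fiber x) = 0) ∧
      (∀ x, x ∈ B₁.1 ↔ d 0 (X.fiber x) = 1) ∧
      d (n + 1) X = max (d n B₀) (d n B₁ + 1) := by
  obtain ⟨B₀, W₀, hB₀, hW₀, hd₀⟩ := hd.2.2.2 n X 0
  obtain ⟨B₁, W₁, hB₁, hW₁, hd₁⟩ := hd.2.2.2 n X 1
  have mem₀ : ∀ x, x ∈ B₀.1 ↔ d 0 (X.fiber x) = 0 := fun x => by
    rw [hB₀]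
    exact ⟨fun ⟨_, h⟩ => h, fun h => ⟨_, h⟩⟩
  have mem₁ : ∀ x, x ∈ B₁.1 ↔ d 0 (X.fiber x) = 1 := fun x => by
    rw [hB₁]
    exact ⟨fun ⟨_, h⟩ => h, fun h => ⟨_, h⟩⟩
  have hX : X.1 = W₀.1 ∪ W₁.1 := by
    rw [hW₀, hW₁]
    refine Subset.antisymm (fun v hv => ?_) (union_subset inter_subset_left inter_subset_left)
    have hfib : (X.fiber (Fin.init v)).1.Nonempty :=
      ⟨fun _ => v (Fin.last _), show Fin.snoc (Fin.init v) (v (Fin.last _)) ∈ X.1 by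
        rwa [Fin.snoc_init_self]⟩
    by_cases h1 : d 0 (X.fiber (Fin.init v)) = 1
    · exact Or.inr ⟨hv, (mem₁ _).2 h1⟩
    · exact Or.inl ⟨hv, (mem₀ _).2 ((hd.le_zero_of_ne_one h1).antisymm (hd.nonneg hfib))⟩
  refine ⟨B₀, B₁, mem₀, mem₁, ?_⟩
  rw [hd.eq_max_of_eq_union hX, hd₀, hd₁]
  simp

lemma IsDimFun.add_one_le_of_one_le_fiber (hd : IsDimFun d) {n : ℕ} (X : DefSet L M (n + 2))
    (Z : DefSet L M (n + 1)) (h : ∀ x ∈ Z.1, 1 ≤ d 0 (X.fiber x)) :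
    d n Z + 1 ≤ d (n + 1) X := by
  obtain ⟨B₀, B₁, -, mem₁, hX⟩ := hd.exists_eq_max_fiber_dims X
  have hZ : Z.1 ⊆ B₁.1 := fun x hx => (mem₁ x).2 ((hd.le_one _).antisymm (h x hx))
  rw [hX]
  exact (add_le_add_left (hd.mono hZ) 1).trans (le_max_right _ _)

lemma IsDimFun.exists_fiber_eq_one (hd : IsDimFun d) (X : DefSet L M 2) (h : 2 ≤ d 1 X) :
    ∃ x, d 0 (X.fiber x) = 1 := by
  obtain ⟨B₀, B₁, -, mem₁, hX⟩ := hd.exists_eq_max_fiber_dims X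
  have hB₀ : ¬ 2 ≤ d 0 B₀ := fun h₂ => absurd (h₂.trans (hd.le_one B₀)) (by decide)
  rw [hX, le_max_iff, or_iff_right hB₀, show (2 : WithBot ℕ) = 1 + 1 from rfl,
    WithBot.add_le_add_iff_right WithBot.one_ne_bot] at h
  obtain ⟨x, hx⟩ := hd.nonempty_of_one_le h
  exact ⟨x, (mem₁ x).1 hx⟩

end Fibers

def HasIsolatingIntervals {α : Type*} [LinearOrder α] (s : Set α) : Prop :=
  ∀ c, ∃ l u, c ∈ Ioo l u ∧ s ∩ Ioo l u ⊆ {c}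

section Isolating

variable {α : Type*} [LinearOrder α] {s t : Set α}

lemma HasIsolatingIntervals.mono (hs : HasIsolatingIntervals s) (hts : t ⊆ s) :
    HasIsolatingIntervals t := fun c =>
  let ⟨l, u, hc, h⟩ := hs c
  ⟨l, u, hc, (inter_subset_inter_left _ hts).trans h⟩

lemma HasIsolatingIntervals.dual (hs : HasIsolatingIntervals s) :
    HasIsolatingIntervals (α := αᵒᵈ) s := fun c =>
  let ⟨l, u, hc, h⟩ := hs c
  ⟨u, l, hc.symm, fun _ hx => h ⟨hx.1, hx.2.symm⟩⟩

lemma orderTopology_orderTop : @OrderTopology α (orderTop α) _ :=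
  @OrderTopology.mk α (orderTop α) _ (by
    unfold orderTop Preorder.topology
    simp_rw [exists_or])

lemma hasIsolatingIntervals_of_isClosed_of_discreteIn [NoMinOrder α] [NoMaxOrder α]
    (hclosed : (orderTop α).IsOpen sᶜ) (hdisc : DiscreteIn (orderTop α) s) :
    HasIsolatingIntervals s := by
  let _ := orderTop α
  have := orderTopology_orderTop (α := α)
  intro c
  obtain ⟨U, hU, hcU⟩ : ∃ U ∈ nhds c, s ∩ U ⊆ {c} := by
    by_cases hc : c ∈ s
    · obtain ⟨U, hUo, hUs⟩ := hdisc c hc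
      have hcU : c ∈ U := (hUs.symm ▸ mem_singleton c : c ∈ U ∩ s).1
      exact ⟨U, IsOpen.mem_nhds hUo hcU, by rw [inter_comm, hUs]⟩
    · exact ⟨sᶜ, IsOpen.mem_nhds hclosed hc, by rw [inter_compl_self]; exact empty_subset _⟩
  obtain ⟨l, u, hc, hlu⟩ := mem_nhds_iff_exists_Ioo_subset.1 hU
  exact ⟨l, u, hc, (inter_subset_inter_right _ hlu).trans hcU⟩

end Isolating

section Cuts

variable {L : FirstOrder.Language.{v, w}} {M : Type u} [L.Structure M] [LinearOrder M]
  {d : ∀ n : ℕ, DefSet L M (n + 1) → WithBot ℕ} (hd : IsDimFun d) (hlt : LtDefinable L M)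
include hd

lemma IsDimFun.interIio_mono (Z : DefSet L M 1) {a b : M} (hab : a ≤ b) :
    d 0 (Z.interIio hlt a) ≤ d 0 (Z.interIio hlt b) :=
  hd.mono fun _ hv => ⟨hv.1, hv.2.trans_le hab⟩

lemma IsDimFun.interIio_le_of_inter_Ico_subset_singleton (Z : DefSet L M 1) {a b p : M}
    (h : asSet1 Z.1 ∩ Ico a b ⊆ {p}) :
    d 0 (Z.interIio hlt b) ≤ max (d 0 (Z.interIio hlt a)) 0 := by
  rw [← hd.singleton p]
  refine hd.le_max_of_subset_union fun v ⟨hvZ, hvb⟩ => ?_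
  rw [fin_one_eta v] at hvZ ⊢
  by_cases hva : v 0 < a
  · exact Or.inl ⟨hvZ, hva⟩
  · exact Or.inr (by rw [h ⟨hvZ, not_lt.1 hva, hvb⟩]; rfl)

lemma IsDimFun.le_max_interIio_interIoi (Z : DefSet L M 1) (a : M) :
    d 0 Z ≤ max (max (d 0 (Z.interIio hlt a)) 0) (d 0 (Z.interIoi hlt a)) := by
  rw [← hd.singleton a,
    ← hd.eq_max_of_eq_union (Z := (Z.interIio hlt a).union (.singleton a)) rfl]
  refine hd.le_max_of_subset_union fun v hv => ?_
  rcases lt_trichotomy (v 0) a with h | h | h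
  · exact Or.inl (Or.inl ⟨hv, h⟩)
  · exact Or.inl (Or.inr (by rw [fin_one_eta v, h]; rfl))
  · exact Or.inr ⟨hv, h⟩

lemma IsDimFun.exists_defSet_eq_dim_interIio_eq_one (Z : DefSet L M 1) :
    ∃ S : DefSet L M 1, asSet1 S.1 = {a | d 0 (Z.interIio hlt a) = 1} := by
  let C : DefSet L M 2 :=
    ⟨{v | (fun _ => v 1) ∈ Z.1 ∧ v 1 < v 0}, (Z.2.preimage_comp fun _ => 1).inter hlt.dual⟩
  obtain ⟨-, S, -, mem₁, -⟩ := hd.exists_eq_max_fiber_dims C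
  refine ⟨S, ext fun a => ?_⟩
  have hfib : C.fiber (fun _ => a) = Z.interIio hlt a := by
    refine Subtype.ext (ext fun y => ?_)
    rw [DefSet.mem_fiber_iff, fin_one_eta y]
    rfl
  exact (mem₁ _).trans (by rw [hfib]; rfl)

lemma IsDimFun.exists_dim_interIoi_eq_one (Z : DefSet L M 1) (hZ : d 0 Z = 1)
    (hall : ∀ a, d 0 (Z.interIio hlt a) = 1) : ∃ a, d 0 (Z.interIoi hlt a) = 1 := by
  let C : DefSet L M 2 :=
    ⟨{v | (fun _ => v 0) ∈ Z.1 ∧ (fun _ => v 1) ∈ Z.1 ∧ v 1 < v 0},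
      (Z.2.preimage_comp fun _ => 0).inter ((Z.2.preimage_comp fun _ => 1).inter hlt.dual)⟩
  let C' : DefSet L M 2 := ⟨{v | v ∘ Equiv.swap 0 1 ∈ C.1}, C.2.preimage_comp _⟩
  have hC : 2 ≤ d 1 C := by
    refine (hZ ▸ hd.add_one_le_of_one_le_fiber C Z fun x hx => ?_ : 1 + 1 ≤ d 1 C)
    rw [← hall (x 0)]
    refine hd.mono fun y ⟨hyZ, hyx⟩ => DefSet.mem_fiber_iff.2 ?_
    rw [fin_one_eta y, fin_one_eta x] at *
    exact ⟨hx, hyZ, hyx⟩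
  obtain ⟨x, hx⟩ := hd.exists_fiber_eq_one C' (hC.trans_eq (hd.2.2.1 1 _ C C' rfl).symm)
  refine ⟨x 0, (hd.le_one _).antisymm (hx ▸ hd.mono fun y hy => ?_)⟩
  rw [DefSet.mem_fiber_iff] at hy
  obtain ⟨hyZ, -, hxy⟩ := hy
  rw [fin_one_eta y]
  exact ⟨hyZ, hxy⟩

end Cuts

section ClosedDiscrete

variable {L : FirstOrder.Language.{v, w}} {M : Type u} [L.Structure M] [LinearOrder M]
  {d : ∀ n : ℕ, DefSet L M (n + 1) → WithBot ℕ} (hd : IsDimFun d) (hlt : LtDefinable L M)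
  (hdc : DefinablyComplete L M)
include hd hdc

lemma IsDimFun.dim_interIio_eq_one_of_exists (Z : DefSet L M 1)
    (hZ : HasIsolatingIntervals (asSet1 Z.1)) (h : ∃ a, d 0 (Z.interIio hlt a) = 1) (b : M) :
    d 0 (Z.interIio hlt b) = 1 := by
  obtain ⟨S, hS⟩ := hd.exists_defSet_eq_dim_interIio_eq_one hlt Z
  have upward : ∀ a ∈ asSet1 S.1, ∀ a', a ≤ a' → a' ∈ asSet1 S.1 := by
    intro a ha a' haa'
    rw [hS] at ha ⊢
    exact (hd.le_one _).antisymm (ha ▸ hd.interIio_mono hlt Z haa')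
  by_contra hb
  have hbS : b ∉ asSet1 S.1 := by rwa [hS]
  have hbdd : BddBelow (asSet1 S.1) :=
    ⟨b, fun a ha => le_of_not_ge fun hab => hbS (upward a ha b hab)⟩
  obtain ⟨c, hc⟩ := (hdc S).2 (hS ▸ h) hbdd
  obtain ⟨l, u, ⟨hlc, hcu⟩, hiso⟩ := hZ c
  have hl : d 0 (Z.interIio hlt l) ≤ 0 := hd.le_zero_of_ne_one fun hl =>
    (hc.1 (hS ▸ hl : l ∈ asSet1 S.1)).not_gt hlc
  have hc0 : d 0 (Z.interIio hlt c) ≤ 0 := by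
    refine (hd.interIio_le_of_inter_Ico_subset_singleton hlt Z (p := l) ?_).trans
      (max_le hl le_rfl)
    rintro x ⟨hx, hlx, hxc⟩
    refine hlx.eq_or_lt.elim Eq.symm fun hlx => ?_
    exact absurd (hiso ⟨hx, hlx, hxc.trans hcu⟩) hxc.ne
  have hu0 : d 0 (Z.interIio hlt u) ≤ 0 :=
    (hd.interIio_le_of_inter_Ico_subset_singleton hlt Z fun _ ⟨hx, hcx, hxu⟩ =>
      hiso ⟨hx, hlc.trans_le hcx, hxu⟩).trans (max_le hc0 le_rfl)
  obtain ⟨s, hs, -, hsu⟩ := hc.exists_between hcu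
  have huS := upward s hs u hsu.le
  rw [hS] at huS
  exact absurd (huS ▸ hu0) (by decide)

lemma IsDimFun.dim_interIoi_eq_one_of_exists (Z : DefSet L M 1)
    (hZ : HasIsolatingIntervals (asSet1 Z.1)) (h : ∃ a, d 0 (Z.interIoi hlt a) = 1) (b : M) :
    d 0 (Z.interIoi hlt b) = 1 :=
  IsDimFun.dim_interIio_eq_one_of_exists (M := Mᵒᵈ) hd hlt.dual hdc.dual Z hZ.dual h b

lemma IsDimFun.dim_interIio_ne_one (X : DefSet L M 1) (hX : HasIsolatingIntervals (asSet1 X.1))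
    (a : M) : d 0 (X.interIio hlt a) ≠ 1 := by
  intro ha
  let Z := X.interIio hlt a
  have hall := hd.dim_interIio_eq_one_of_exists hlt hdc X hX ⟨a, ha⟩
  have hZall : ∀ b, d 0 (Z.interIio hlt b) = 1 := fun b =>
    (hd.le_one _).antisymm (hall (min b a) ▸ hd.mono fun v ⟨hv, hvb⟩ =>
      ⟨⟨hv, hvb.trans_le (min_le_right b a)⟩, hvb.trans_le (min_le_left b a)⟩)
  have hZ : HasIsolatingIntervals (asSet1 Z.1) := hX.mono fun _ hx => hx.1
  have hZa := hd.dim_interIoi_eq_one_of_exists hlt hdc Z hZ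
    (hd.exists_dim_interIoi_eq_one hlt Z ha hZall) a
  have hempty : (Z.interIoi hlt a).1 = ∅ :=
    eq_empty_of_forall_notMem fun _ hv => hv.1.2.not_gt hv.2
  rw [hd.eq_bot_of_eq_empty hempty] at hZa
  exact absurd hZa (by decide)

lemma IsDimFun.dim_interIoi_ne_one (X : DefSet L M 1) (hX : HasIsolatingIntervals (asSet1 X.1))
    (a : M) : d 0 (X.interIoi hlt a) ≠ 1 :=
  IsDimFun.dim_interIio_ne_one (M := Mᵒᵈ) hd hlt.dual hdc.dual X hX.dual a

end ClosedDiscrete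

theorem statement_12_general (L : FirstOrder.Language.{v, w}) (M : Type u) [L.Structure M]
    [LinearOrder M] [NoMinOrder M] [NoMaxOrder M]
    (hlt : LtDefinable L M) (hdc : DefinablyComplete L M)
    (d : ∀ n : ℕ, DefSet L M (n + 1) → WithBot ℕ) (hd : d ∈ DimFuns L M)
    (X : DefSet L M 1) (hne : (asSet1 X.1).Nonempty)
    (hclosed : (orderTop M).IsOpen ((asSet1 X.1)ᶜ))
    (hdisc : DiscreteIn (orderTop M) (asSet1 X.1)) :
    d 0 X = 0 := by
  have hd : IsDimFun d := hd
  have hX := hasIsolatingIntervals_of_isClosed_of_discreteIn hclosed hdisc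
  obtain ⟨a, ha⟩ := hne
  have hbelow := hd.le_zero_of_ne_one (hd.dim_interIio_ne_one hlt hdc X hX a)
  have habove := hd.le_zero_of_ne_one (hd.dim_interIoi_ne_one hlt hdc X hX a)
  exact le_antisymm ((hd.le_max_interIio_interIoi hlt X a).trans
    (max_le (max_le hbelow le_rfl) habove)) (hd.nonneg ⟨_, ha⟩)

/-- Let `M` be a definably complete expansion of a dense linear order
without endpoints and `dim` a dimension function on `M`. Then `dim X = 0` for every nonempty
definable subset `X` of `M` that is closed and discrete in the order topology. -/
theorem statement_12 (L : FirstOrder.Language.{v, w}) (M : Type u) [L.Structure M]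
    [LinearOrder M] [DenselyOrdered M] [NoMinOrder M] [NoMaxOrder M]
    (hlt : LtDefinable L M) (hdc : DefinablyComplete L M)
    (d : ∀ n : ℕ, DefSet L M (n + 1) → WithBot ℕ) (hd : d ∈ DimFuns L M)
    (X : DefSet L M 1) (hne : (asSet1 X.1).Nonempty)
    (hclosed : (orderTop M).IsOpen ((asSet1 X.1)ᶜ))
    (hdisc : DiscreteIn (orderTop M) (asSet1 X.1)) :
    d 0 X = 0 :=
  statement_12_general L M hlt hdc d hd X hne hclosed hdisc

end PaperDim
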